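/- arXiv:1803.09812 — 5 statements merged into one kernel-verified Lean document; each statement's English description precedes it below -/
import Mathlib

section
/- Let M > 1, α, β, γ ∈ ℝ with β² + γ² = 1, and let t > 0. Then for all ζ, y ∈ ℝ, the double integral over (ζ̄, ȳ) ∈ ℝ² of exp(−(|ζ−ζ̄+αt|² + |y−ȳ|²)/(Mt) − |βζ̄ + γȳ|²/M) dζ̄ dȳ equals (Mπt/√(1+t)) · exp(−|βζ + γy + αβt|²/(M(1+t))). -/
open MeasureTheory
set_option maxHeartbeats 1000000

lemma gauss_int (a b c : ℝ) (ha : 0 < a) :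
    ∫ x : ℝ, Real.exp (-(a*x^2 + b*x + c)) =
      Real.sqrt (Real.pi/a) * Real.exp (b^2/(4*a) - c) := by
  have ha' : a ≠ 0 := ne_of_gt ha
  have h : ∀ x : ℝ, -(a*x^2 + b*x + c) = -a*(x + b/(2*a))^2 + (b^2/(4*a) - c) := by
    intro x; field_simp; ring
  simp only [h, Real.exp_add]
  rw [integral_mul_const, integral_add_right_eq_self (fun x => Real.exp (-a*x^2)) (b/(2*a)),
    integral_gaussian]

theorem gaussian_convolution_line (M α β γ t : ℝ) (hM : 1 < M)
    (hunit : β ^ 2 + γ ^ 2 = 1) (ht : 0 < t) (ζ y : ℝ) :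
    (∫ ζb : ℝ, ∫ yb : ℝ,
        Real.exp (-((|ζ - ζb + α * t|) ^ 2 + (|y - yb|) ^ 2) / (M * t)
          - (|β * ζb + γ * yb|) ^ 2 / M)) =
      (M * Real.pi * t / Real.sqrt (1 + t)) *
        Real.exp (-(|β * ζ + γ * y + α * β * t|) ^ 2 / (M * (1 + t))) := by
  have hM0 : (0:ℝ) < M := lt_trans one_pos hM
  have hMt : (0:ℝ) < M * t := mul_pos hM0 ht
  have h1γ : (0:ℝ) < 1 + γ^2 * t := by nlinarith [sq_nonneg γ]
  have h1t : (0:ℝ) < 1 + t := by linarith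
  have hβ2 : β^2 = 1 - γ^2 := by linarith
  set a1 : ℝ := (1 + γ^2*t)/(M*t) with ha1def
  have ha1 : 0 < a1 := div_pos h1γ hMt
  set a2 : ℝ := (1+t)/(M*t*(1+γ^2*t)) with ha2def
  have ha2 : 0 < a2 := div_pos h1t (mul_pos hMt h1γ)
  have hMt' : M * t ≠ 0 := ne_of_gt hMt
  have h1γ' : (1:ℝ) + γ^2 * t ≠ 0 := ne_of_gt h1γ
  have h1t' : (1:ℝ) + t ≠ 0 := ne_of_gt h1t
  have hM' : M ≠ 0 := ne_of_gt hM0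
  -- inner integral
  have step1 : ∀ ζb : ℝ,
      (∫ yb : ℝ, Real.exp (-((|ζ - ζb + α * t|) ^ 2 + (|y - yb|) ^ 2) / (M * t)
          - (|β * ζb + γ * yb|) ^ 2 / M)) =
      Real.sqrt (Real.pi/a1) *
        Real.exp ((-2*y/(M*t) + 2*β*γ*ζb/M)^2/(4*a1)
          - (((ζ - ζb + α*t)^2 + y^2)/(M*t) + β^2*ζb^2/M)) := by
    intro ζb
    have hpt : ∀ yb : ℝ,
        (-((|ζ - ζb + α * t|) ^ 2 + (|y - yb|) ^ 2) / (M * t)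
          - (|β * ζb + γ * yb|) ^ 2 / M) =
        -(a1*yb^2 + (-2*y/(M*t) + 2*β*γ*ζb/M)*yb
          + (((ζ - ζb + α*t)^2 + y^2)/(M*t) + β^2*ζb^2/M)) := by
      intro yb
      simp only [sq_abs, ha1def]
      field_simp
      ring
    simp only [hpt]
    exact gauss_int _ _ _ ha1
  have step2 : ∀ ζb : ℝ,
      ((-2*y/(M*t) + 2*β*γ*ζb/M)^2/(4*a1)
          - (((ζ - ζb + α*t)^2 + y^2)/(M*t) + β^2*ζb^2/M)) =
      -(a2*ζb^2 + (-2*(ζ+α*t)/(M*t) + 2*β*γ*y/(M*(1+γ^2*t)))*ζb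
        + ((ζ+α*t)^2/(M*t) + γ^2*y^2/(M*(1+γ^2*t)))) := by
    intro ζb
    simp only [ha1def, ha2def]
    field_simp
    ring_nf
    rw [hβ2]
    ring
  have step4 :
      ((-2*(ζ+α*t)/(M*t) + 2*β*γ*y/(M*(1+γ^2*t)))^2/(4*a2)
        - ((ζ+α*t)^2/(M*t) + γ^2*y^2/(M*(1+γ^2*t)))) =
      -(β*ζ + γ*y + α*β*t)^2/(M*(1+t)) := by
    simp only [ha2def]
    field_simp
    ring_nf
    rw [hβ2]
    ring
  calc (∫ ζb : ℝ, ∫ yb : ℝ,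
        Real.exp (-((|ζ - ζb + α * t|) ^ 2 + (|y - yb|) ^ 2) / (M * t)
          - (|β * ζb + γ * yb|) ^ 2 / M))
      = ∫ ζb : ℝ, Real.sqrt (Real.pi/a1) *
          Real.exp (-(a2*ζb^2 + (-2*(ζ+α*t)/(M*t) + 2*β*γ*y/(M*(1+γ^2*t)))*ζb
            + ((ζ+α*t)^2/(M*t) + γ^2*y^2/(M*(1+γ^2*t))))) := by
        refine integral_congr_ae (Filter.Eventually.of_forall fun ζb => ?_)
        simp only [step1, step2]
    _ = Real.sqrt (Real.pi/a1) * (Real.sqrt (Real.pi/a2) *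
          Real.exp ((-2*(ζ+α*t)/(M*t) + 2*β*γ*y/(M*(1+γ^2*t)))^2/(4*a2)
            - ((ζ+α*t)^2/(M*t) + γ^2*y^2/(M*(1+γ^2*t))))) := by
        rw [integral_const_mul, gauss_int _ _ _ ha2]
    _ = (M * Real.pi * t / Real.sqrt (1 + t)) *
        Real.exp (-(|β * ζ + γ * y + α * β * t|) ^ 2 / (M * (1 + t))) := by
        rw [step4, ← mul_assoc, ← Real.sqrt_mul (by positivity)]
        rw [show Real.pi/a1 * (Real.pi/a2) = (M*Real.pi*t)^2/(1+t) by
          simp only [ha1def, ha2def]; field_simp]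
        rw [Real.sqrt_div (by positivity), Real.sqrt_sq (by positivity)]
        rw [sq_abs]
end

section
/- Let M > 1, α, β, γ ∈ ℝ with β² + γ² = 1, and let 0 ≤ s < t. Then for all ζ, y ∈ ℝ, the double integral over (ζ̄, ȳ) ∈ ℝ² of exp(−(|ζ−ζ̄+α(t−s)|² + |y−ȳ|²)/(M(t−s)) − |βζ̄ + γȳ + αβs|²/(M(1+s))) dζ̄ dȳ equals (Mπ(t−s)√(1+s)/√(1+t)) · exp(−|βζ + γy + αβt|²/(M(1+t))). -/
open MeasureTheory Real

/-- Completing the square: `(x - u)² / a + (p x + q)² / b = (x - x₀)² / σ + (p u + q)² / (b + p² a)`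
with `σ = a b / (b + p² a)`. -/
theorem integral_exp_neg_sq_div_sub_sq_div {a b : ℝ} (ha : 0 < a) (hb : 0 < b) (p q u : ℝ) :
    ∫ x : ℝ, exp (-(x - u) ^ 2 / a - (p * x + q) ^ 2 / b) =
      √(π * a * b / (b + p ^ 2 * a)) * exp (-(p * u + q) ^ 2 / (b + p ^ 2 * a)) := by
  have hc : 0 < b + p ^ 2 * a := by positivity
  have hsq : ∀ x : ℝ, exp (-(x - u) ^ 2 / a - (p * x + q) ^ 2 / b) =
      exp (-((b + p ^ 2 * a) / (a * b)) * (x - (b * u - a * p * q) / (b + p ^ 2 * a)) ^ 2) *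
        exp (-(p * u + q) ^ 2 / (b + p ^ 2 * a)) := by
    intro x
    rw [← exp_add]
    congr 1
    field_simp
    ring
  simp_rw [hsq]
  rw [integral_mul_const, integral_sub_right_eq_self (fun x ↦ exp (-_ * x ^ 2)),
    integral_gaussian, div_div_eq_mul_div, mul_assoc]

/-- Integrating out `y` leaves a Gaussian in `x` of the same shape, with the width `b` of the
ridge widened to `b + γ² a`; integrating out `x` then widens it to `b + (β² + γ²) a = a + b`. -/
theorem integral_integral_exp_neg_sq_div_sub_sq_div {a b β γ : ℝ} (ha : 0 < a) (hb : 0 < b)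
    (hunit : β ^ 2 + γ ^ 2 = 1) (u v q : ℝ) :
    ∫ x : ℝ, ∫ y : ℝ, exp (-((x - u) ^ 2 + (y - v) ^ 2) / a - (β * x + γ * y + q) ^ 2 / b) =
      π * a * √(b / (a + b)) * exp (-(β * u + γ * v + q) ^ 2 / (a + b)) := by
  have hc : 0 < b + γ ^ 2 * a := by positivity
  have hca : b + γ ^ 2 * a + β ^ 2 * a = a + b := by linear_combination a * hunit
  have inner : ∀ x : ℝ,
      ∫ y : ℝ, exp (-((x - u) ^ 2 + (y - v) ^ 2) / a - (β * x + γ * y + q) ^ 2 / b) =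
        √(π * a * b / (b + γ ^ 2 * a)) *
          exp (-(x - u) ^ 2 / a - (β * x + (γ * v + q)) ^ 2 / (b + γ ^ 2 * a)) := by
    intro x
    have hsplit : ∀ y : ℝ,
        exp (-((x - u) ^ 2 + (y - v) ^ 2) / a - (β * x + γ * y + q) ^ 2 / b) =
          exp (-(x - u) ^ 2 / a) * exp (-(y - v) ^ 2 / a - (γ * y + (β * x + q)) ^ 2 / b) := by
      intro y
      rw [← exp_add]
      ring_nf
    simp_rw [hsplit]
    rw [integral_const_mul, integral_exp_neg_sq_div_sub_sq_div ha hb, mul_left_comm, ← exp_add]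
    ring_nf
  have hconst : π * a * b / (b + γ ^ 2 * a) * (π * a * (b + γ ^ 2 * a) / (a + b)) =
      (π * a) ^ 2 * (b / (a + b)) := by
    field_simp
  simp_rw [inner]
  rw [integral_const_mul, integral_exp_neg_sq_div_sub_sq_div ha hc, hca, ← mul_assoc,
    ← sqrt_mul (by positivity), hconst, sqrt_mul (sq_nonneg _), sqrt_sq (by positivity)]
  ring_nf

theorem gaussian_convolution_line_time (M α β γ s t : ℝ) (hM : 1 < M)
    (hunit : β ^ 2 + γ ^ 2 = 1) (hs : 0 ≤ s) (hst : s < t) (ζ y : ℝ) :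
    (∫ ζb : ℝ, ∫ yb : ℝ,
        Real.exp (-((|ζ - ζb + α * (t - s)|) ^ 2 + (|y - yb|) ^ 2) / (M * (t - s))
          - (|β * ζb + γ * yb + α * β * s|) ^ 2 / (M * (1 + s)))) =
      (M * Real.pi * (t - s) * Real.sqrt (1 + s) / Real.sqrt (1 + t)) *
        Real.exp (-(|β * ζ + γ * y + α * β * t|) ^ 2 / (M * (1 + t))) := by
  have hM₀ : 0 < M := by linarith
  have hA : 0 < M * (t - s) := mul_pos hM₀ (by linarith)
  have hB : 0 < M * (1 + s) := mul_pos hM₀ (by linarith)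
  have hintegrand : ∀ ζb yb : ℝ,
      |ζ - ζb + α * (t - s)| ^ 2 + |y - yb| ^ 2 = (ζb - (ζ + α * (t - s))) ^ 2 + (yb - y) ^ 2 := by
    intro ζb yb
    rw [sq_abs, sq_abs]
    ring
  simp_rw [hintegrand, sq_abs]
  rw [integral_integral_exp_neg_sq_div_sub_sq_div hA hB hunit]
  have hsum : M * (t - s) + M * (1 + s) = M * (1 + t) := by ring
  have hratio : M * (1 + s) / (M * (1 + t)) = (1 + s) / (1 + t) := by
    rw [mul_div_mul_left _ _ hM₀.ne']
  rw [hsum, hratio, sqrt_div' _ (by linarith)]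
  ring_nf
end

section
/- There exists a constant C > 0 such that for all t > 0: ∫₀ᵗ ds / (√(1+s)·√s·√(t−s)) ≤ C·log(2+t)/√(1+t). -/
/-!
Split the integral at `t / 2`. On `[0, t/2]` we have `t - s ≥ t/2`, and `1 / (√s √(1 + s))`
is the derivative of `2 arsinh √s`; on `[t/2, t]` we have `(1 + s) s ≥ (1 + t/2) t/2`, and
`1 / √(t - s)` integrates to `2 √(t/2)`. This bounds the integral by
`2 arsinh √(t/2) / √(t/2) + 2 / √(1 + t/2)`. The logarithm comes from
`arsinh x ≤ log (1 + 2x)` for large `t`; for small `t`, `arsinh x ≤ x` suffices.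
-/

open Real Set MeasureTheory intervalIntegral

theorem intervalIntegrable_and_integral_le_sub_of_le_deriv {f g G : ℝ → ℝ} {a b : ℝ}
    (hab : a ≤ b) (hf : ContinuousOn f (Ioo a b)) (hG : ContinuousOn G (Icc a b))
    (hderiv : ∀ x ∈ Ioo a b, HasDerivAt G (g x) x)
    (hf_nonneg : ∀ x ∈ Ioo a b, 0 ≤ f x) (hfg : ∀ x ∈ Ioo a b, f x ≤ g x) :
    IntervalIntegrable f volume a b ∧ ∫ x in a..b, f x ≤ G b - G a := by
  have hg : IntervalIntegrable g volume a b := by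
    rw [intervalIntegrable_iff_integrableOn_Ioc_of_le hab]
    exact integrableOn_deriv_of_nonneg hG hderiv fun x hx => (hf_nonneg x hx).trans (hfg x hx)
  have hf_int : IntervalIntegrable f volume a b := by
    rw [intervalIntegrable_iff_integrableOn_Ioo_of_le hab] at hg ⊢
    refine hg.mono' (hf.aestronglyMeasurable measurableSet_Ioo) ?_
    refine ae_restrict_of_forall_mem measurableSet_Ioo fun x hx => ?_
    rw [norm_of_nonneg (hf_nonneg x hx)]
    exact hfg x hx
  refine ⟨hf_int, ?_⟩
  calc ∫ x in a..b, f x ≤ ∫ x in a..b, g x := integral_mono_on_of_le_Ioo hab hf_int hg hfg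
    _ = G b - G a := integral_eq_sub_of_hasDerivAt_of_le hab hG hderiv hg

theorem hasDerivAt_two_mul_arsinh_sqrt {x : ℝ} (hx : 0 < x) :
    HasDerivAt (fun s => 2 * arsinh √s) (√x * √(1 + x))⁻¹ x := by
  refine (((hasDerivAt_sqrt hx.ne').arsinh).const_mul 2).congr_deriv ?_
  rw [sq_sqrt hx.le, smul_eq_mul]
  field_simp

theorem hasDerivAt_neg_two_mul_sqrt_sub {c x : ℝ} (hx : x < c) :
    HasDerivAt (fun s => -(2 * √(c - s))) (√(c - x))⁻¹ x := by
  refine ((((hasDerivAt_id x).const_sub c).sqrt (sub_pos.2 hx).ne').const_mul 2).neg.congr_deriv ?_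
  have : 0 < √(c - x) := sqrt_pos.2 (sub_pos.2 hx)
  field_simp
  simp [this.ne']

theorem arsinh_le_self {x : ℝ} (hx : 0 ≤ x) : arsinh x ≤ x :=
  calc arsinh x ≤ arsinh (sinh x) := arsinh_le_arsinh.2 (self_le_sinh_iff.2 hx)
    _ = x := arsinh_sinh x

theorem arsinh_le_log_one_add_two_mul {x : ℝ} (hx : 0 ≤ x) : arsinh x ≤ log (1 + 2 * x) := by
  have : √(1 + x ^ 2) ≤ 1 + x := by
    rw [sqrt_le_left (by positivity)]; nlinarith
  exact log_le_log (by positivity) (by linarith)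

theorem one_le_two_mul_log_two_add {t : ℝ} (ht : 0 ≤ t) : 1 ≤ 2 * log (2 + t) := by
  have := log_two_gt_d9
  have := log_le_log two_pos (by linarith : (2 : ℝ) ≤ 2 + t)
  linarith

theorem two_mul_arsinh_sqrt_half_div_le {t : ℝ} (ht : 0 < t) :
    2 * arsinh √(t / 2) / √(t / 2) ≤ 6 * log (2 + t) / √(1 + t) := by
  set x := √(t / 2)
  have hx : 0 < x := sqrt_pos.2 (by linarith)
  have hx2 : x ^ 2 = t / 2 := sq_sqrt (by linarith)
  have hL := one_le_two_mul_log_two_add ht.le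
  rw [div_le_div_iff₀ hx (sqrt_pos.2 (by linarith))]
  rcases le_total t 1 with ht1 | ht1
  · have h_arsinh : arsinh x ≤ x := arsinh_le_self hx.le
    have h_sqrt : √(1 + t) ≤ 3 / 2 := by
      rw [sqrt_le_left (by norm_num)]; linarith
    nlinarith [arsinh_nonneg_iff.2 hx.le]
  · have h_arsinh : arsinh x ≤ log (2 + t) :=
      (arsinh_le_log_one_add_two_mul hx.le).trans
        (log_le_log (by positivity) (by nlinarith [sq_nonneg (x - 1)]))
    have h_sqrt : √(1 + t) ≤ 2 * x := by
      rw [sqrt_le_left (by positivity)]; nlinarith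
    nlinarith [arsinh_nonneg_iff.2 hx.le]

theorem two_div_sqrt_one_add_half_le {t : ℝ} (ht : 0 ≤ t) :
    2 / √(1 + t / 2) ≤ 6 * log (2 + t) / √(1 + t) := by
  have hL := one_le_two_mul_log_two_add ht
  have h_pos : 0 < √(1 + t / 2) := sqrt_pos.2 (by linarith)
  have h_sqrt : √(1 + t) ≤ 3 / 2 * √(1 + t / 2) := by
    rw [sqrt_le_left (by positivity), mul_pow, sq_sqrt (by linarith)]; linarith
  rw [div_le_div_iff₀ h_pos (sqrt_pos.2 (by linarith))]
  nlinarith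

noncomputable def convKernel (t s : ℝ) : ℝ := 1 / (√(1 + s) * √s * √(t - s))

theorem convKernel_nonneg (t s : ℝ) : 0 ≤ convKernel t s := by
  unfold convKernel; positivity

theorem continuousOn_convKernel (t : ℝ) : ContinuousOn (convKernel t) (Ioo 0 t) := by
  intro s hs
  have : 0 < √(1 + s) := sqrt_pos.2 (by linarith [hs.1])
  have : 0 < √s := sqrt_pos.2 hs.1
  have : 0 < √(t - s) := sqrt_pos.2 (sub_pos.2 hs.2)
  exact (continuousAt_const.div (by fun_prop) (by positivity)).continuousWithinAt

theorem convKernel_le_of_le_half {t s : ℝ} (hs : 0 < s) (hst : s ≤ t / 2) :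
    convKernel t s ≤ (√(t / 2))⁻¹ * (√s * √(1 + s))⁻¹ := by
  have h_sqrt : √(t / 2) ≤ √(t - s) := sqrt_le_sqrt (by linarith)
  have : 0 < √(1 + s) := sqrt_pos.2 (by linarith)
  have : 0 < √s := sqrt_pos.2 hs
  have : 0 < √(t / 2) := sqrt_pos.2 (by linarith)
  rw [convKernel, ← mul_inv, one_div]
  apply inv_anti₀ (by positivity)
  nlinarith [mul_le_mul_of_nonneg_left h_sqrt (by positivity : 0 ≤ √s * √(1 + s))]

theorem convKernel_le_of_half_le {t s : ℝ} (hts : t / 2 ≤ s) (hst : s < t) :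
    convKernel t s ≤ (√(1 + t / 2) * √(t / 2))⁻¹ * (√(t - s))⁻¹ := by
  have : 0 < √(1 + t / 2) := sqrt_pos.2 (by linarith)
  have : 0 < √(t / 2) := sqrt_pos.2 (by linarith)
  have : 0 < √(t - s) := sqrt_pos.2 (sub_pos.2 hst)
  rw [convKernel, ← mul_inv, one_div]
  gcongr

theorem integral_convKernel_left_half_le {t : ℝ} (ht : 0 < t) :
    IntervalIntegrable (convKernel t) volume 0 (t / 2) ∧
      ∫ s in 0..t / 2, convKernel t s ≤ 2 * arsinh √(t / 2) / √(t / 2) := by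
  have h := intervalIntegrable_and_integral_le_sub_of_le_deriv
    (G := fun s => (√(t / 2))⁻¹ * (2 * arsinh √s)) (by linarith)
    ((continuousOn_convKernel t).mono (Ioo_subset_Ioo_right (by linarith)))
    (continuous_const.mul
      (continuous_const.mul (continuous_arsinh.comp continuous_sqrt))).continuousOn
    (fun s hs => (hasDerivAt_two_mul_arsinh_sqrt hs.1).const_mul _)
    (fun s _ => convKernel_nonneg t s) (fun s hs => convKernel_le_of_le_half hs.1 hs.2.le)
  refine ⟨h.1, h.2.trans_eq ?_⟩
  simp only [sqrt_zero, arsinh_zero]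
  ring

theorem integral_convKernel_right_half_le {t : ℝ} (ht : 0 < t) :
    IntervalIntegrable (convKernel t) volume (t / 2) t ∧
      ∫ s in t / 2..t, convKernel t s ≤ 2 / √(1 + t / 2) := by
  have h := intervalIntegrable_and_integral_le_sub_of_le_deriv
    (G := fun s => (√(1 + t / 2) * √(t / 2))⁻¹ * -(2 * √(t - s))) (by linarith)
    ((continuousOn_convKernel t).mono (Ioo_subset_Ioo_left (by linarith))) (by fun_prop)
    (fun s hs => (hasDerivAt_neg_two_mul_sqrt_sub hs.2).const_mul _)
    (fun s _ => convKernel_nonneg t s) (fun s hs => convKernel_le_of_half_le hs.1.le hs.2)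
  refine ⟨h.1, h.2.trans_eq ?_⟩
  have : 0 < √(t / 2) := sqrt_pos.2 (by linarith)
  rw [show t - t / 2 = t / 2 by ring, sub_self, sqrt_zero]
  field_simp
  ring

theorem convolution_time_estimate_log :
    ∃ C > (0 : ℝ), ∀ t : ℝ, 0 < t →
      (∫ s in (0:ℝ)..t, 1 / (Real.sqrt (1 + s) * Real.sqrt s * Real.sqrt (t - s))) ≤
        C * Real.log (2 + t) / Real.sqrt (1 + t) := by
  refine ⟨12, by norm_num, fun t ht => ?_⟩
  obtain ⟨h_int_left, h_left⟩ := integral_convKernel_left_half_le ht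
  obtain ⟨h_int_right, h_right⟩ := integral_convKernel_right_half_le ht
  calc ∫ s in 0..t, convKernel t s
      = (∫ s in 0..t / 2, convKernel t s) + ∫ s in t / 2..t, convKernel t s :=
        (integral_add_adjacent_intervals h_int_left h_int_right).symm
    _ ≤ 2 * arsinh √(t / 2) / √(t / 2) + 2 / √(1 + t / 2) := add_le_add h_left h_right
    _ ≤ 6 * log (2 + t) / √(1 + t) + 6 * log (2 + t) / √(1 + t) :=
        add_le_add (two_mul_arsinh_sqrt_half_div_le ht) (two_div_sqrt_one_add_half_le ht.le)
    _ = 12 * log (2 + t) / √(1 + t) := by ring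
end

section
/- There exists a constant C > 0 such that for all t ≥ 0: ∫₀ᵗ log²(2+s)/((1+s)^{3/2}·√(1+t−s)) ds ≤ C/√(1+t). -/
/-!
Since `log² (2 + s) ≲ (1 + s)^(1/4)`, the integrand is dominated by the kernel
`(1 + s)^(-a) (1 + t - s)^(-b)` with `a = 5/4`, `b = 1/2`. As `(1 + s) + (1 + t - s) ≥ 1 + t`,
one of the two factors has base at least `(1 + t)/2`; bounding that factor by its value there
leaves `(1 + t)^(-b) ∫ (1 + s)^(-a)`, which is `O((1 + t)^(-b))` because `a > 1`, or
`(1 + t)^(-a) ∫ (1 + t - s)^(-b) = O((1 + t)^(1 - a - b))`, which is smaller.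
-/

open Real intervalIntegral Set

lemma sq_log_le_rpow_div {x ε : ℝ} (hx : 1 ≤ x) (hε : 0 < ε) :
    log x ^ 2 ≤ 4 / ε ^ 2 * x ^ ε := by
  have hlog : log x ≤ x ^ (ε / 2) / (ε / 2) := log_le_rpow_div (by linarith) (by positivity)
  calc log x ^ 2 ≤ (x ^ (ε / 2) / (ε / 2)) ^ 2 := pow_le_pow_left₀ (log_nonneg hx) hlog 2
    _ = 4 / ε ^ 2 * x ^ ε := by
      rw [div_pow, ← rpow_natCast, ← rpow_mul (by linarith)]
      field_simp
      norm_num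

lemma rpow_neg_mul_rpow_neg_le {x y T a b : ℝ} (hx : 0 < x) (hy : 0 < y) (hT : 0 < T)
    (hxy : T ≤ x + y) (ha : 0 ≤ a) (hb : 0 ≤ b) :
    x ^ (-a) * y ^ (-b) ≤ 2 ^ b * T ^ (-b) * x ^ (-a) + 2 ^ a * T ^ (-a) * y ^ (-b) := by
  have half_rpow_neg (c : ℝ) : (T / 2) ^ (-c) = 2 ^ c * T ^ (-c) := by
    rw [div_rpow hT.le zero_le_two, rpow_neg zero_le_two, div_inv_eq_mul, mul_comm]
  rcases le_total (T / 2) y with hy' | hx'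
  · have hy_le : y ^ (-b) ≤ 2 ^ b * T ^ (-b) :=
      half_rpow_neg b ▸ rpow_le_rpow_of_nonpos (by positivity) hy' (by linarith)
    have := mul_le_mul_of_nonneg_left hy_le (rpow_nonneg hx.le (-a))
    have : 0 ≤ 2 ^ a * T ^ (-a) * y ^ (-b) := by positivity
    linarith
  · have hx_le : x ^ (-a) ≤ 2 ^ a * T ^ (-a) :=
      half_rpow_neg a ▸ rpow_le_rpow_of_nonpos (by positivity) (by linarith) (by linarith)
    have := mul_le_mul_of_nonneg_right hx_le (rpow_nonneg hy.le (-b))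
    have : 0 ≤ 2 ^ b * T ^ (-b) * x ^ (-a) := by positivity
    linarith

lemma integral_mono_on_of_nonneg {f g : ℝ → ℝ} {a b : ℝ} (hab : a ≤ b)
    (hf : ∀ x ∈ Icc a b, 0 ≤ f x) (hg : IntervalIntegrable g MeasureTheory.volume a b)
    (h : ∀ x ∈ Icc a b, f x ≤ g x) : ∫ x in a..b, f x ≤ ∫ x in a..b, g x := by
  rw [integral_of_le hab, integral_of_le hab]
  exact MeasureTheory.setIntegral_mono_of_nonneg (fun x hx => hf x (Ioc_subset_Icc_self hx))
    (fun x hx => h x (Ioc_subset_Icc_self hx)) hg.1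

lemma continuousOn_one_add_rpow (r : ℝ) : ContinuousOn (fun s : ℝ => (1 + s) ^ r) (Ici 0) :=
  ContinuousOn.rpow_const (by fun_prop) fun s hs => .inl (by linarith [mem_Ici.mp hs])

lemma continuousOn_one_add_sub_rpow (t r : ℝ) :
    ContinuousOn (fun s : ℝ => (1 + t - s) ^ r) (Iic t) :=
  ContinuousOn.rpow_const (by fun_prop) fun s hs => .inl (by linarith [mem_Iic.mp hs])

section OneAddRpow

variable {r t : ℝ}

lemma intervalIntegrable_one_add_rpow_mul_sub_rpow (a b : ℝ) (ht : 0 ≤ t) :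
    IntervalIntegrable (fun s => (1 + s) ^ a * (1 + t - s) ^ b) MeasureTheory.volume 0 t := by
  refine ContinuousOn.intervalIntegrable ?_
  rw [uIcc_of_le ht]
  exact ((continuousOn_one_add_rpow a).mono Icc_subset_Ici_self).mul
    ((continuousOn_one_add_sub_rpow t b).mono Icc_subset_Iic_self)

lemma zero_notMem_uIcc_one_one_add (ht : 0 ≤ t) : (0 : ℝ) ∉ uIcc 1 (1 + t) := by
  rw [uIcc_of_le (by linarith)]
  exact fun h => by linarith [h.1]

lemma integral_one_add_rpow (hr : r ≠ -1) (ht : 0 ≤ t) :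
    ∫ s in 0..t, (1 + s) ^ r = ((1 + t) ^ (r + 1) - 1) / (r + 1) := by
  rw [integral_comp_add_left (· ^ r), add_zero,
    integral_rpow (.inr ⟨hr, zero_notMem_uIcc_one_one_add ht⟩), one_rpow]

lemma integral_one_add_sub_rpow (hr : r ≠ -1) (ht : 0 ≤ t) :
    ∫ s in 0..t, (1 + t - s) ^ r = ((1 + t) ^ (r + 1) - 1) / (r + 1) := by
  rw [integral_comp_sub_left (· ^ r), add_sub_cancel_right, sub_zero,
    integral_rpow (.inr ⟨hr, zero_notMem_uIcc_one_one_add ht⟩), one_rpow]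

end OneAddRpow

theorem integral_one_add_rpow_neg_mul_sub_rpow_neg_le {a b t : ℝ} (ha : 1 < a) (hb₀ : 0 ≤ b)
    (hb₁ : b < 1) (ht : 0 ≤ t) :
    ∫ s in 0..t, (1 + s) ^ (-a) * (1 + t - s) ^ (-b) ≤
      (2 ^ b / (a - 1) + 2 ^ a / (1 - b)) * (1 + t) ^ (-b) := by
  set T := 1 + t
  have hT : 1 ≤ T := by linarith
  have hint (c d : ℝ) := intervalIntegrable_one_add_rpow_mul_sub_rpow c d ht
  have hint₁ : IntervalIntegrable (fun s => (1 + s) ^ (-a)) MeasureTheory.volume 0 t := by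
    simpa using hint (-a) 0
  have hint₂ : IntervalIntegrable (fun s => (1 + t - s) ^ (-b)) MeasureTheory.volume 0 t := by
    simpa using hint 0 (-b)
  have h₁ : ∫ s in 0..t, (1 + s) ^ (-a) ≤ 1 / (a - 1) := by
    rw [integral_one_add_rpow (by linarith) ht, ← neg_div_neg_eq, neg_sub, neg_add, neg_neg,
      neg_add_eq_sub]
    have : 0 ≤ (1 + t) ^ (1 - a) := rpow_nonneg (by linarith) _
    exact div_le_div_of_nonneg_right (by linarith) (by linarith)
  have h₂ : ∫ s in 0..t, (1 + t - s) ^ (-b) ≤ T ^ (1 - b) / (1 - b) := by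
    rw [integral_one_add_sub_rpow (by linarith) ht, neg_add_eq_sub]
    exact div_le_div_of_nonneg_right (by linarith) (by linarith)
  have hT_pow : T ^ (-a) * T ^ (1 - b) ≤ T ^ (-b) := by
    rw [← rpow_add (by linarith)]
    exact rpow_le_rpow_of_exponent_le hT (by linarith)
  calc ∫ s in 0..t, (1 + s) ^ (-a) * (1 + t - s) ^ (-b)
      ≤ ∫ s in 0..t,
          (2 ^ b * T ^ (-b) * (1 + s) ^ (-a) + 2 ^ a * T ^ (-a) * (1 + t - s) ^ (-b)) :=
        integral_mono_on ht (hint _ _) ((hint₁.const_mul _).add (hint₂.const_mul _)) fun s hs =>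
          rpow_neg_mul_rpow_neg_le (by linarith [hs.1]) (by linarith [hs.2]) (by linarith)
            (by linarith) (by linarith) hb₀
    _ = 2 ^ b * T ^ (-b) * (∫ s in 0..t, (1 + s) ^ (-a)) +
          2 ^ a * T ^ (-a) * ∫ s in 0..t, (1 + t - s) ^ (-b) := by
        rw [integral_add (hint₁.const_mul _) (hint₂.const_mul _), integral_const_mul,
          integral_const_mul]
    _ ≤ 2 ^ b * T ^ (-b) * (1 / (a - 1)) + 2 ^ a * T ^ (-a) * (T ^ (1 - b) / (1 - b)) := by
        gcongr
    _ = 2 ^ b / (a - 1) * T ^ (-b) + 2 ^ a / (1 - b) * (T ^ (-a) * T ^ (1 - b)) := by ring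
    _ ≤ (2 ^ b / (a - 1) + 2 ^ a / (1 - b)) * T ^ (-b) := by
        have : 0 ≤ 2 ^ a / (1 - b) := div_nonneg (by positivity) (by linarith)
        nlinarith

lemma sq_log_two_add_div_le {s t : ℝ} (hs : 0 ≤ s) (hst : s ≤ t) :
    log (2 + s) ^ 2 / ((1 + s) ^ ((3 : ℝ) / 2) * √(1 + t - s)) ≤
      64 * 2 ^ (1 / 4 : ℝ) * ((1 + s) ^ (-(5 / 4 : ℝ)) * (1 + t - s) ^ (-(1 / 2 : ℝ))) := by
  have hlog : log (2 + s) ^ 2 ≤ 64 * 2 ^ (1 / 4 : ℝ) * (1 + s) ^ (1 / 4 : ℝ) :=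
    calc log (2 + s) ^ 2 ≤ 64 * (2 + s) ^ (1 / 4 : ℝ) := by
          convert sq_log_le_rpow_div (x := 2 + s) (by linarith) (by norm_num : (0 : ℝ) < 1 / 4)
            using 2
          norm_num
      _ ≤ 64 * (2 * (1 + s)) ^ (1 / 4 : ℝ) := by gcongr; linarith
      _ = 64 * 2 ^ (1 / 4 : ℝ) * (1 + s) ^ (1 / 4 : ℝ) := by
          rw [mul_rpow zero_le_two (by linarith), mul_assoc]
  have hkernel : (1 + s) ^ (-(5 / 4 : ℝ)) * (1 + t - s) ^ (-(1 / 2 : ℝ)) =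
      (1 + s) ^ (1 / 4 : ℝ) / ((1 + s) ^ ((3 : ℝ) / 2) * √(1 + t - s)) := by
    rw [sqrt_eq_rpow, show -(5 / 4 : ℝ) = 1 / 4 - 3 / 2 by norm_num, rpow_sub (by linarith),
      rpow_neg (by linarith)]
    ring
  rw [hkernel, mul_div_assoc']
  exact div_le_div_of_nonneg_right hlog (by positivity)

theorem convolution_time_estimate_logsq :
    ∃ C > (0 : ℝ), ∀ t : ℝ, 0 ≤ t →
      (∫ s in (0:ℝ)..t,
          (Real.log (2 + s)) ^ 2 / ((1 + s) ^ ((3 : ℝ) / 2) * Real.sqrt (1 + t - s))) ≤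
        C / Real.sqrt (1 + t) := by
  set K : ℝ := 64 * 2 ^ (1 / 4 : ℝ)
  refine ⟨K * (2 ^ (1 / 2 : ℝ) / (5 / 4 - 1) + 2 ^ (5 / 4 : ℝ) / (1 - 1 / 2)), by positivity,
    fun t ht => ?_⟩
  calc ∫ s in 0..t, log (2 + s) ^ 2 / ((1 + s) ^ ((3 : ℝ) / 2) * √(1 + t - s))
      ≤ ∫ s in 0..t, K * ((1 + s) ^ (-(5 / 4 : ℝ)) * (1 + t - s) ^ (-(1 / 2 : ℝ))) :=
        integral_mono_on_of_nonneg ht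
          (fun s hs => div_nonneg (sq_nonneg _)
            (mul_nonneg (rpow_nonneg (by linarith [hs.1]) _) (sqrt_nonneg _)))
          ((intervalIntegrable_one_add_rpow_mul_sub_rpow _ _ ht).const_mul K)
          fun s hs => sq_log_two_add_div_le hs.1 hs.2
    _ = K * ∫ s in 0..t, (1 + s) ^ (-(5 / 4 : ℝ)) * (1 + t - s) ^ (-(1 / 2 : ℝ)) :=
        integral_const_mul _ _
    _ ≤ K * ((2 ^ (1 / 2 : ℝ) / (5 / 4 - 1) + 2 ^ (5 / 4 : ℝ) / (1 - 1 / 2)) *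
          (1 + t) ^ (-(1 / 2 : ℝ))) := by
        gcongr
        exact integral_one_add_rpow_neg_mul_sub_rpow_neg_le (by norm_num) (by norm_num)
          (by norm_num) ht
    _ = _ := by rw [rpow_neg (by linarith), sqrt_eq_rpow]; ring
end

section
/- There exists a constant C > 0 such that for all t > 0: ∫₀ᵗ ds / ((1+s)·√s·√(t−s)) ≤ C/√(1+t). -/
open MeasureTheory Set

/-- helper: monotone comparison giving integrability plus integral bound -/
lemma cte_integral_le {f g : ℝ → ℝ} {a b : ℝ} (hab : a ≤ b)
    (hmf : Measurable f)
    (h0 : ∀ s ∈ Set.Icc a b, 0 ≤ f s)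
    (hle : ∀ s ∈ Set.Icc a b, f s ≤ g s)
    (hg : IntervalIntegrable g volume a b) :
    IntervalIntegrable f volume a b ∧
      (∫ s in a..b, f s) ≤ ∫ s in a..b, g s := by
  have hfint : IntervalIntegrable f volume a b := by
    rw [intervalIntegrable_iff_integrableOn_Ioc_of_le hab]
    have hgInt : IntegrableOn g (Set.Ioc a b) volume := by
      rw [intervalIntegrable_iff_integrableOn_Ioc_of_le hab] at hg
      exact hg
    refine hgInt.mono' hmf.aestronglyMeasurable ?_
    filter_upwards [ae_restrict_mem measurableSet_Ioc] with s hs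
    have hs' : s ∈ Set.Icc a b := Set.Ioc_subset_Icc_self hs
    rw [Real.norm_eq_abs, abs_of_nonneg (h0 s hs')]
    exact hle s hs'
  exact ⟨hfint, intervalIntegral.integral_mono_on hab hfint hg hle⟩

lemma cte_one_div_le {A A' B : ℝ} (hA' : 0 < A') (hA : A' ≤ A) (hB : 0 ≤ B) :
    1 / (A * B) ≤ 1 / (A' * B) := by
  rcases eq_or_lt_of_le hB with h | h
  · simp [← h]
  · apply one_div_le_one_div_of_le (by positivity)
    exact mul_le_mul_of_nonneg_right hA h.le

lemma cte_rpow_half (b : ℝ) (hb : 0 ≤ b) :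
    (∫ s in (0:ℝ)..b, s ^ (-(1/2) : ℝ)) = 2 * Real.sqrt b := by
  rw [integral_rpow (Or.inl (by norm_num))]
  rw [Real.zero_rpow (by norm_num)]
  rw [show (-(1/2) : ℝ) + 1 = 1/2 by norm_num, Real.sqrt_eq_rpow]
  ring

theorem convolution_time_estimate_localized :
    ∃ C > (0 : ℝ), ∀ t : ℝ, 0 < t →
      (∫ s in (0:ℝ)..t, 1 / ((1 + s) * Real.sqrt s * Real.sqrt (t - s))) ≤
        C / Real.sqrt (1 + t) := by
  refine ⟨12, by norm_num, fun t ht => ?_⟩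
  set f : ℝ → ℝ := fun s => 1 / ((1 + s) * Real.sqrt s * Real.sqrt (t - s)) with hf
  have hmf : Measurable f := by
    apply Measurable.div measurable_const
    exact ((measurable_const.add measurable_id).mul
      (Real.continuous_sqrt.measurable)).mul
      ((Real.continuous_sqrt.measurable).comp (measurable_const.sub measurable_id))
  have hf0 : ∀ s ∈ Set.Icc (0:ℝ) t, 0 ≤ f s := by
    intro s hs
    have h1 : (0:ℝ) ≤ 1 + s := by linarith [hs.1]
    have := Real.sqrt_nonneg s
    have := Real.sqrt_nonneg (t - s)
    positivity
  have ht2 : (0:ℝ) < t / 2 := by linarith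
  have hst2 : Real.sqrt (t/2) > 0 := Real.sqrt_pos.mpr ht2
  -- second half bound: ∫_{t/2}^t f ≤ 4 / (2 + t)
  have hI2 : IntervalIntegrable f volume (t/2) t ∧
      (∫ s in (t/2)..t, f s) ≤ 4 / (2 + t) := by
    set c2 : ℝ := ((1 + t/2) * Real.sqrt (t/2))⁻¹ with hc2
    have hc2pos : 0 < c2 := by positivity
    set g : ℝ → ℝ := fun s => c2 * ((t - s) ^ (-(1/2) : ℝ)) with hg
    have hgInt : IntervalIntegrable g volume (t/2) t := by
      have h1 : IntervalIntegrable (fun x : ℝ => x ^ (-(1/2) : ℝ)) volume 0 (t/2) :=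
        intervalIntegral.intervalIntegrable_rpow' (by norm_num)
      have h2 := (h1.comp_sub_left t).symm
      rw [show t - t/2 = t/2 by ring, sub_zero] at h2
      exact h2.const_mul c2
    have hle : ∀ s ∈ Set.Icc (t/2) t, f s ≤ g s := by
      intro s hs
      have hs0 : 0 ≤ t - s := by linarith [hs.2]
      have hrw : (t - s) ^ (-(1/2) : ℝ) = (Real.sqrt (t - s))⁻¹ := by
        rw [Real.rpow_neg hs0, Real.sqrt_eq_rpow]
      rw [hg]; dsimp only
      rw [hrw]
      have : c2 * (Real.sqrt (t-s))⁻¹ = 1 / (((1 + t/2) * Real.sqrt (t/2)) * Real.sqrt (t-s)) := by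
        rw [hc2]; field_simp
      rw [this, hf]; dsimp only
      apply cte_one_div_le (by positivity) ?_ (Real.sqrt_nonneg _)
      have h1 : 1 + t/2 ≤ 1 + s := by linarith [hs.1]
      have h2 : Real.sqrt (t/2) ≤ Real.sqrt s := Real.sqrt_le_sqrt hs.1
      exact mul_le_mul h1 h2 (Real.sqrt_nonneg _) (by linarith [hs.1])
    have hIcc : Set.Icc (t/2) t ⊆ Set.Icc 0 t := Set.Icc_subset_Icc (by linarith) le_rfl
    obtain ⟨hint, hle'⟩ := cte_integral_le (by linarith) hmf
      (fun s hs => hf0 s (hIcc hs)) hle hgInt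
    refine ⟨hint, hle'.trans ?_⟩
    have hgval : (∫ s in (t/2)..t, g s) = 4 / (2 + t) := by
      rw [hg]
      simp only
      rw [intervalIntegral.integral_const_mul]
      rw [intervalIntegral.integral_comp_sub_left (fun u : ℝ => u ^ (-(1/2):ℝ)) t]
      simp only [sub_self, sub_div]
      rw [show t - t/2 = t/2 by ring, cte_rpow_half (t/2) ht2.le, hc2]
      have key : ((1 + t/2) * Real.sqrt (t/2))⁻¹ * (2 * Real.sqrt (t/2)) = 2 / (1 + t/2) := by
        field_simp
      rw [key, div_eq_div_iff (by linarith) (by linarith)]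
      ring
    exact hgval.le
  -- generic low-range bound: on [0,b] with b ≤ t/2
  have hLow : ∀ b : ℝ, 0 < b → b ≤ t/2 → IntervalIntegrable f volume 0 b ∧
      (∫ s in (0:ℝ)..b, f s) ≤ (Real.sqrt (t/2))⁻¹ * (2 * Real.sqrt b) := by
    intro b hb hbt
    set g : ℝ → ℝ := fun s => (Real.sqrt (t/2))⁻¹ * s ^ (-(1/2) : ℝ) with hgdef
    have hgInt : IntervalIntegrable g volume 0 b :=
      (intervalIntegral.intervalIntegrable_rpow' (by norm_num)).const_mul _
    have hle : ∀ s ∈ Set.Icc (0:ℝ) b, f s ≤ g s := by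
      intro s hs
      have hs0 : (0:ℝ) ≤ s := hs.1
      have hrw : s ^ (-(1/2) : ℝ) = (Real.sqrt s)⁻¹ := by
        rw [Real.rpow_neg hs0, Real.sqrt_eq_rpow]
      have hA : Real.sqrt (t/2) ≤ (1 + s) * Real.sqrt (t - s) := by
        have h1 : Real.sqrt (t/2) ≤ Real.sqrt (t - s) :=
          Real.sqrt_le_sqrt (by linarith [hs.2])
        nlinarith [Real.sqrt_nonneg (t - s)]
      have hrhs : g s = 1 / (Real.sqrt (t/2) * Real.sqrt s) := by
        rw [hgdef]; dsimp only; rw [hrw, one_div, mul_inv]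
      have hlhs : f s = 1 / (((1 + s) * Real.sqrt (t - s)) * Real.sqrt s) := by
        rw [hf]; dsimp only; ring_nf
      rw [hrhs, hlhs]
      exact cte_one_div_le hst2 hA (Real.sqrt_nonneg s)
    have hIcc : Set.Icc (0:ℝ) b ⊆ Set.Icc 0 t := Set.Icc_subset_Icc le_rfl (by linarith)
    obtain ⟨hint, hle'⟩ := cte_integral_le hb.le hmf (fun s hs => hf0 s (hIcc hs)) hle hgInt
    refine ⟨hint, hle'.trans ?_⟩
    rw [hgdef]
    simp only
    rw [intervalIntegral.integral_const_mul, cte_rpow_half b hb.le]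
  have h1t : (0:ℝ) < Real.sqrt (1 + t) := Real.sqrt_pos.mpr (by linarith)
  have hsqrt4 : Real.sqrt 4 = 2 := by
    rw [show (4:ℝ) = 2^2 by norm_num, Real.sqrt_sq (by norm_num)]
  by_cases hcase : t ≤ 2
  · -- small time
    obtain ⟨hi1, hb1⟩ := hLow (t/2) ht2 le_rfl
    have hb1' : (∫ s in (0:ℝ)..(t/2), f s) ≤ 2 := by
      refine hb1.trans_eq ?_
      field_simp
    rw [← intervalIntegral.integral_add_adjacent_intervals hi1 hI2.1]
    have h2' : (∫ s in (t/2)..t, f s) ≤ 4 / (2 + t) := hI2.2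
    have h4 : (4:ℝ) / (2 + t) ≤ 2 := by
      rw [div_le_iff₀ (by linarith)]; linarith
    have hs2 : Real.sqrt (1 + t) ≤ 2 := by
      rw [← hsqrt4]; exact Real.sqrt_le_sqrt (by linarith)
    have : (4:ℝ) ≤ 12 / Real.sqrt (1 + t) := by
      rw [le_div_iff₀ h1t]; nlinarith
    linarith
  · -- large time
    push_neg at hcase
    have h1le : (1:ℝ) ≤ t/2 := by linarith
    obtain ⟨hi1, hb1⟩ := hLow 1 one_pos h1le
    rw [Real.sqrt_one, mul_one] at hb1
    -- middle piece [1, t/2]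
    have hMid : IntervalIntegrable f volume 1 (t/2) ∧
        (∫ s in (1:ℝ)..(t/2), f s) ≤ (Real.sqrt (t/2))⁻¹ * 2 := by
      set g : ℝ → ℝ := fun s => (Real.sqrt (t/2))⁻¹ * s ^ (-(3/2) : ℝ) with hgdef
      have h0mem : (0:ℝ) ∉ Set.uIcc (1:ℝ) (t/2) := by
        rw [Set.uIcc_of_le h1le]
        rintro ⟨h0, -⟩; linarith
      have hgInt : IntervalIntegrable g volume 1 (t/2) :=
        (intervalIntegral.intervalIntegrable_rpow (Or.inr h0mem)).const_mul _
      have hle : ∀ s ∈ Set.Icc (1:ℝ) (t/2), f s ≤ g s := by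
        intro s hs
        have hs1 : (1:ℝ) ≤ s := hs.1
        have hs0 : (0:ℝ) < s := by linarith
        have hts : t/2 ≤ t - s := by linarith [hs.2]
        have hsq : Real.sqrt (t/2) ≤ Real.sqrt (t - s) := Real.sqrt_le_sqrt hts
        have hss : Real.sqrt s > 0 := Real.sqrt_pos.mpr hs0
        have hrw : s ^ (-(3/2) : ℝ) = (s * Real.sqrt s)⁻¹ := by
          rw [Real.rpow_neg hs0.le, show (3/2 : ℝ) = 1 + 1/2 by norm_num,
            Real.rpow_add hs0, Real.rpow_one, Real.sqrt_eq_rpow]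
        have hrhs : g s = 1 / (Real.sqrt (t/2) * (s * Real.sqrt s)) := by
          rw [hgdef]; dsimp only; rw [hrw, one_div, mul_inv, mul_inv]; ring
        rw [hrhs, hf]
        dsimp only
        apply one_div_le_one_div_of_le (by positivity)
        nlinarith [mul_le_mul_of_nonneg_right hsq (by positivity : (0:ℝ) ≤ s * Real.sqrt s),
          mul_nonneg (Real.sqrt_nonneg s) (Real.sqrt_nonneg (t - s))]
      have hIcc : Set.Icc (1:ℝ) (t/2) ⊆ Set.Icc 0 t :=
        Set.Icc_subset_Icc (by norm_num) (by linarith)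
      obtain ⟨hint, hle'⟩ := cte_integral_le h1le hmf (fun s hs => hf0 s (hIcc hs)) hle hgInt
      refine ⟨hint, hle'.trans ?_⟩
      rw [hgdef]
      simp only
      rw [intervalIntegral.integral_const_mul,
        integral_rpow (Or.inr ⟨by norm_num, h0mem⟩)]
      have hnn : (0:ℝ) ≤ (t/2) ^ (-(3/2) + 1 : ℝ) := Real.rpow_nonneg ht2.le _
      have h1p : (1:ℝ) ^ (-(3/2) + 1 : ℝ) = 1 := Real.one_rpow _
      rw [h1p]
      apply mul_le_mul_of_nonneg_left _ (by positivity)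
      rw [show (-(3/2) + 1 : ℝ) = -(1/2) by norm_num] at hnn ⊢
      rw [div_le_iff_of_neg (by norm_num)]
      linarith
    -- assemble
    have hstep1 : IntervalIntegrable f volume 0 (t/2) := hi1.trans hMid.1
    rw [← intervalIntegral.integral_add_adjacent_intervals hstep1 hI2.1,
      ← intervalIntegral.integral_add_adjacent_intervals hi1 hMid.1]
    have hkey : Real.sqrt (1 + t) ≤ 2 * Real.sqrt (t/2) := by
      have h1 : Real.sqrt (1 + t) ≤ Real.sqrt (4 * (t/2)) :=
        Real.sqrt_le_sqrt (by linarith)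
      rwa [Real.sqrt_mul (by norm_num) (t/2), hsqrt4] at h1
    have hA : (Real.sqrt (t/2))⁻¹ * 2 + (Real.sqrt (t/2))⁻¹ * 2 ≤ 8 / Real.sqrt (1 + t) := by
      have : (Real.sqrt (t/2))⁻¹ * 2 + (Real.sqrt (t/2))⁻¹ * 2
          = 8 / (2 * Real.sqrt (t/2)) := by
        field_simp; ring
      rw [this]
      exact div_le_div_of_nonneg_left (by norm_num) h1t hkey
    have hB : (4:ℝ) / (2 + t) ≤ 4 / Real.sqrt (1 + t) := by
      apply div_le_div_of_nonneg_left (by norm_num) h1t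
      nlinarith [Real.sq_sqrt (show (0:ℝ) ≤ 1 + t by linarith), h1t,
        sq_nonneg (Real.sqrt (1 + t) - 1)]
    have hfin : (8:ℝ) / Real.sqrt (1 + t) + 4 / Real.sqrt (1 + t)
        = 12 / Real.sqrt (1 + t) := by ring
    linarith [hb1, hMid.2, hI2.2]
end
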